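/- Assume the time-varying LPV-algorithm setting with variational IQCs and all hypotheses of the variational-IQC tracking theorem (see context), and suppose in addition that m(θ) = m and L(θ) = L are constant on Θ with 0 < m < L. Define γ_fⁱ := λ_i ρ² (L − m), c₁ := λ̄/λ̲, c₂ := 1/λ̲. Then for all k ≥ 1: ‖ξ_k − ξ⋆_k‖² ≤ c₁ ρ^{2k} ‖ξ_0 − ξ⋆_0‖² + c₂ Σ_{t=1}^{k} ρ^{2(k−t)} ( γ_ξ ‖Δξ⋆_{t−1}‖² + γ_δ Σ_{i=1}^{p} ‖Δδ_{t−1}(s_{t−1}ⁱ)‖² ) + c₂ Σ_{i=1}^{p} γ_fⁱ Σ_{t=1}^{k−1} ρ^{2(k−t−1)} ( f̂_t(s_{t−1}ⁱ) − f̂_{t−1}(s_{t−1}ⁱ) ), where f̂_k(x) = f(x,θ_k) − f(x⋆(θ_k),θ_k), Δξ⋆_k = U x⋆(θ_k) − U x⋆(θ_{k+1}), and Δδ_k(x) = ∇_x f(x,θ_k) − ∇_x f(x,θ_{k+1}). -/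

import Mathlib

open scoped RealInnerProductSpace

/-- Cast a plain function vector to Euclidean space. -/
def toE {ι : Type*} [Fintype ι] (v : ι → ℝ) : EuclideanSpace ℝ ι := WithLp.toLp 2 v

/-- The `i`-th `d`-dimensional block of a stacked vector. -/
def blk {d r : ℕ} (v : Fin r × Fin d → ℝ) (i : Fin r) : Fin d → ℝ :=
  fun j => v (i, j)

/-- The quadratic form `vᵀ P v`. -/
def quadForm {ι : Type*} [Fintype ι] (P : Matrix ι ι ℝ) (v : ι → ℝ) : ℝ :=
  dotProduct v (P.mulVec v)

/-- Pack the algorithm state and the IQC filter states into a single vector. -/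
def pack (nξ p d : ℕ) (ξ : Fin nξ → ℝ) (ζ : Fin p → Fin 4 → Fin d → ℝ) :
    (Fin nξ ⊕ (Fin p × Fin 4 × Fin d)) → ℝ :=
  Sum.elim ξ (fun z => ζ z.1 z.2.1 z.2.2)

/-!
Let `ξ̃_k = ξ_k - U x⋆_k` be the error state and `ζ_k` the state of the IQC filter, which is `0`
at `k = 0` and afterwards records the previous outputs `y_{k-1}^i`, measured from `x⋆_k`, together
with the gradients of `f_{k-1}` and `f_k` there. Then `V_k = ‖(ξ̃_k, ζ_k)‖²_{P(θ_k)}` is a Lyapunov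
function: the LMI, applied along the trajectory, gives
`V_{k+1} + Σ λ_i σ_k^i ≤ ρ² V_k + γ_ξ ‖Δξ⋆_k‖² + γ_δ Σ ‖Δδ_k‖²`.
The interpolation inequality for `m`-strongly convex functions with `L`-Lipschitz gradient bounds
each supply `σ_k^i` from below by `D_k^i - ρ² D_{k-1}^i - ρ² (L - m) (f̂_k - f̂_{k-1})(y_{k-1}^i)`,
where the storage `D_k^i ≥ 0` is built from `f̂_k(y_k^i)` and `∇f_k(y_k^i)`. Hence
`V_k + Σ λ_i D_{k-1}^i` contracts by `ρ²` up to the perturbation terms; unrolling this recursion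
and using `λ̲ ‖·‖² ≤ V ≤ λ̄ ‖·‖²` gives the bound.
-/

open Finset

section SmoothConvex

variable {E : Type*} [NormedAddCommGroup E] [InnerProductSpace ℝ E] [CompleteSpace E]
  {φ : E → ℝ} {φ' : E → E}

lemma hasDerivAt_comp_lineMap {a b v : E} {t : ℝ}
    (hφ : HasGradientAt φ v (AffineMap.lineMap a b t)) :
    HasDerivAt (φ ∘ AffineMap.lineMap a b) ⟪v, b - a⟫ t := by
  simpa using hφ.hasFDerivAt.comp_hasDerivAt t AffineMap.hasDerivAt_lineMap

lemma ConvexOn.add_inner_le_of_hasGradientAt (hc : ConvexOn ℝ Set.univ φ) {a v : E}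
    (hφ : HasGradientAt φ v a) (b : E) :
    φ a + ⟪v, b - a⟫ ≤ φ b := by
  have hline : ConvexOn ℝ Set.univ (φ ∘ (AffineMap.lineMap a b : ℝ →ᵃ[ℝ] E)) := by
    simpa using hc.comp_affineMap (AffineMap.lineMap a b : ℝ →ᵃ[ℝ] E)
  have := hline.le_slope_of_hasDerivAt (Set.mem_univ 0) (Set.mem_univ 1) one_pos
    (hasDerivAt_comp_lineMap (t := 0) (by rwa [AffineMap.lineMap_apply_zero]))
  simp only [Function.comp_apply, AffineMap.lineMap_apply_zero, AffineMap.lineMap_apply_one,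
    slope_def_field, sub_zero, div_one] at this
  linarith

lemma le_add_inner_add_of_lipschitz_gradient {M : ℝ} (hφ : ∀ x, HasGradientAt φ (φ' x) x)
    (hlip : ∀ x y, ‖φ' x - φ' y‖ ≤ M * ‖x - y‖) (a b : E) :
    φ b ≤ φ a + ⟪φ' a, b - a⟫ + M / 2 * ‖b - a‖ ^ 2 := by
  set c := AffineMap.lineMap (k := ℝ) a b
  set q : ℝ → ℝ := fun t => φ (c t) - t * ⟪φ' a, b - a⟫ - M / 2 * t ^ 2 * ‖b - a‖ ^ 2
  have hq : ∀ t, HasDerivAt q (⟪φ' (c t), b - a⟫ - ⟪φ' a, b - a⟫ - M * t * ‖b - a‖ ^ 2) t := by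
    intro t
    have hlin : HasDerivAt (fun t : ℝ => t * ⟪φ' a, b - a⟫) ⟪φ' a, b - a⟫ t := by
      simpa using (hasDerivAt_id t).mul_const ⟪φ' a, b - a⟫
    have hquad : HasDerivAt (fun t : ℝ => M / 2 * t ^ 2 * ‖b - a‖ ^ 2) (M * t * ‖b - a‖ ^ 2) t :=
      (((hasDerivAt_pow 2 t).const_mul (M / 2)).mul_const _).congr_deriv (by push_cast; ring)
    exact ((hasDerivAt_comp_lineMap (hφ _)).sub hlin).sub hquad
  have hanti : AntitoneOn q (Set.Icc 0 1) := by
    refine antitoneOn_of_hasDerivWithinAt_nonpos (convex_Icc 0 1)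
      (fun t _ => (hq t).continuousAt.continuousWithinAt) (fun t _ => (hq t).hasDerivWithinAt)
      fun t ht => ?_
    rw [interior_Icc] at ht
    have hct : c t - a = t • (b - a) := AffineMap.lineMap_vsub_left a b t
    calc ⟪φ' (c t), b - a⟫ - ⟪φ' a, b - a⟫ - M * t * ‖b - a‖ ^ 2
        = ⟪φ' (c t) - φ' a, b - a⟫ - M * t * ‖b - a‖ ^ 2 := by rw [inner_sub_left]
      _ ≤ ‖φ' (c t) - φ' a‖ * ‖b - a‖ - M * t * ‖b - a‖ ^ 2 := by
          gcongr; exact real_inner_le_norm _ _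
      _ ≤ M * ‖c t - a‖ * ‖b - a‖ - M * t * ‖b - a‖ ^ 2 := by
          gcongr; exact hlip _ _
      _ = 0 := by rw [hct, norm_smul, Real.norm_of_nonneg ht.1.le]; ring
  have := hanti (Set.left_mem_Icc.2 zero_le_one) (Set.right_mem_Icc.2 zero_le_one) zero_le_one
  simp only [q, c, AffineMap.lineMap_apply_zero, AffineMap.lineMap_apply_one, zero_mul, one_mul,
    mul_zero, mul_one, one_pow, ne_eq, OfNat.ofNat_ne_zero, not_false_eq_true, zero_pow, sub_zero,
    tsub_le_iff_right] at this
  linarith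

lemma hasGradientAt_norm_sub_sq (z x : E) :
    HasGradientAt (fun y => ‖y - z‖ ^ 2) ((2 : ℝ) • (x - z)) x := by
  rw [hasGradientAt_iff_hasFDerivAt]
  refine (((hasFDerivAt_id x).sub_const z).norm_sq).congr_fderiv ?_
  ext v
  simp

lemma ConvexOn.add_inner_add_norm_sq_le (hc : ConvexOn ℝ Set.univ φ)
    (hφ : ∀ x, HasGradientAt φ (φ' x) x) {M : ℝ} (hM : 0 < M)
    (hqub : ∀ x y, φ y ≤ φ x + ⟪φ' x, y - x⟫ + M / 2 * ‖y - x‖ ^ 2) (a b : E) :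
    φ a + ⟪φ' a, b - a⟫ + 1 / (2 * M) * ‖φ' b - φ' a‖ ^ 2 ≤ φ b := by
  set v := φ' b - φ' a
  -- compare `φ` at `b - M⁻¹ • v` with its affine minorant at `a` and its quadratic majorant at `b`
  have hlow := hc.add_inner_le_of_hasGradientAt (hφ a) (b - M⁻¹ • v)
  have hup := hqub b (b - M⁻¹ • v)
  rw [sub_right_comm, inner_sub_right, real_inner_smul_right] at hlow
  rw [sub_sub_cancel_left, inner_neg_right, norm_neg, real_inner_smul_right, norm_smul, mul_pow,
    Real.norm_eq_abs, sq_abs] at hup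
  have hv : ⟪φ' b, v⟫ - ⟪φ' a, v⟫ = ‖v‖ ^ 2 := by
    rw [← inner_sub_left, real_inner_self_eq_norm_sq]
  have hM' : M / 2 * (M⁻¹ ^ 2 * ‖v‖ ^ 2) = M⁻¹ * ‖v‖ ^ 2 - 1 / (2 * M) * ‖v‖ ^ 2 := by
    field_simp; ring
  linear_combination hlow + hup - M⁻¹ * hv + hM'

end SmoothConvex

section Sector

variable {E : Type*} [NormedAddCommGroup E] [InnerProductSpace ℝ E] [CompleteSpace E]
  {g : E → ℝ} {g' : E → E} {m L : ℝ}

structure IsSmoothStronglyConvex (m L : ℝ) (g : E → ℝ) (g' : E → E) : Prop where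
  hasGradientAt : ∀ x, HasGradientAt g (g' x) x
  convexOn_sub_sq : ConvexOn ℝ Set.univ fun x => g x - m / 2 * ‖x‖ ^ 2
  lipschitz : ∀ x y, ‖g' x - g' y‖ ≤ L * ‖x - y‖

lemma mul_add_inner_add_norm_sq_le_of_strongConvex (hf : IsSmoothStronglyConvex m L g g')
    (hmL : m < L) (z a b : E) :
    (L - m) * ((g a - m / 2 * ‖a - z‖ ^ 2) + ⟪g' a - m • (a - z), b - a⟫)
      + 1 / 2 * ‖(g' b - m • (b - z)) - (g' a - m • (a - z))‖ ^ 2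
      ≤ (L - m) * (g b - m / 2 * ‖b - z‖ ^ 2) := by
  set φ : E → ℝ := fun x => g x - m / 2 * ‖x - z‖ ^ 2
  set φ' : E → E := fun x => g' x - m • (x - z)
  have hφc : ConvexOn ℝ Set.univ φ := by
    refine (hf.convexOn_sub_sq.add (((innerₛₗ ℝ (m • z)).convexOn convex_univ).add_const
      (-(m / 2 * ‖z‖ ^ 2)))).congr fun x _ => ?_
    simp only [φ, Pi.add_apply, innerₛₗ_apply_apply, norm_sub_sq_real, real_inner_smul_left,
      real_inner_comm z x]
    ring
  have hφg : ∀ x, HasGradientAt φ (φ' x) x := fun x => by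
    rw [hasGradientAt_iff_hasFDerivAt]
    refine ((hf.hasGradientAt x).hasFDerivAt.sub
      ((hasGradientAt_norm_sub_sq z x).hasFDerivAt.const_mul (m / 2))).congr_fderiv ?_
    ext v
    simp only [φ', map_smul, map_sub, sub_apply,
      InnerProductSpace.toDual_apply_apply, smul_apply, smul_eq_mul,
      sub_right_inj]
    ring
  have hqub : ∀ x y, φ y ≤ φ x + ⟪φ' x, y - x⟫ + (L - m) / 2 * ‖y - x‖ ^ 2 := fun x y => by
    have hsplit : ‖y - z‖ ^ 2 = ‖x - z‖ ^ 2 + 2 * ⟪x - z, y - x⟫ + ‖y - x‖ ^ 2 := by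
      rw [← norm_add_sq_real, sub_add_sub_cancel']
    simp only [φ, φ', hsplit, inner_sub_left, real_inner_smul_left]
    linarith [le_add_inner_add_of_lipschitz_gradient hf.hasGradientAt hf.lipschitz x y]
  have hM : 0 < L - m := sub_pos.2 hmL
  calc _ = (L - m) * (φ a + ⟪φ' a, b - a⟫ + 1 / (2 * (L - m)) * ‖φ' b - φ' a‖ ^ 2) := by
        field_simp; ring
    _ ≤ (L - m) * φ b := by gcongr; exact hφc.add_inner_add_norm_sq_le hφg hM hqub a b

noncomputable def sectorStorage (g : E → ℝ) (g' : E → E) (m L : ℝ) (z w : E) : ℝ :=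
  (L - m) * ((g w - g z) - m / 2 * ‖w - z‖ ^ 2) - 1 / 2 * ‖g' w - m • (w - z)‖ ^ 2

/-- The supply rate `σ` of the dissipation LMI, for one block, with `r = ρ²`. -/
noncomputable def sectorSupply (m L a r : ℝ) (s u ζ₁ ζ₂ ζ₃ ζ₄ : E) : ℝ :=
  ⟪L • s - u - r • (L • ζ₁) + r • ζ₂, u - m • s⟫ + r * ‖ζ₄‖ ^ 2 - r * a ^ 2 * ‖ζ₁‖ ^ 2
    + r / 2 * ‖ζ₃‖ ^ 2 - r / 2 * ‖ζ₂ - m • ζ₁‖ ^ 2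

lemma sectorStorage_nonneg (hf : IsSmoothStronglyConvex m L g g') (hmL : m < L) {z : E}
    (hz : g' z = 0) (w : E) :
    0 ≤ sectorStorage g g' m L z w := by
  have h := mul_add_inner_add_norm_sq_le_of_strongConvex hf hmL z z w
  simp only [hz, sub_self, smul_zero, inner_zero_left, norm_zero, sub_zero] at h
  unfold sectorStorage
  linarith

lemma sectorStorage_sub_smul_le (hf : IsSmoothStronglyConvex m L g g') (hmL : m < L) {z : E}
    (hz : g' z = 0) {r : ℝ} (hr0 : 0 ≤ r) (hr1 : r ≤ 1) (x y : E) :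
    sectorStorage g g' m L z y - r * sectorStorage g g' m L z x
      ≤ ⟪(L • (y - z) - g' y) - r • (L • (x - z) - g' x), g' y - m • (y - z)⟫ := by
  -- combine the interpolation inequalities from `y` to `z` and from `y` to `x`
  -- with weights `1 - r` and `r`
  have hIz := mul_add_inner_add_norm_sq_le_of_strongConvex hf hmL z y z
  have hIx := mul_add_inner_add_norm_sq_le_of_strongConvex hf hmL z y x
  rw [show (L • (y - z) - g' y) - r • (L • (x - z) - g' x)
      = ((L - m) • (y - z) - (g' y - m • (y - z)))
        - r • ((L - m) • (x - z) - (g' x - m • (x - z))) by module]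
  unfold sectorStorage
  rw [show x - y = (x - z) - (y - z) by abel, show z - y = -(y - z) by abel] at *
  set s := y - z
  set v := x - z
  set Q := g' y - m • s
  set Qx := g' x - m • v
  simp only [hz, sub_self, smul_zero, zero_sub, norm_neg, norm_zero, inner_neg_right] at hIz
  rw [inner_sub_right, norm_sub_sq_real Qx Q] at hIx
  simp only [inner_sub_left, real_inner_smul_left, real_inner_self_eq_norm_sq]
  rw [real_inner_comm Q s, real_inner_comm Q v]
  linear_combination mul_le_mul_of_nonneg_left hIz (sub_nonneg.2 hr1)
    + mul_le_mul_of_nonneg_left hIx hr0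

lemma sectorStorage_le_sectorSupply_zero (hf : IsSmoothStronglyConvex m L g g') (hmL : m < L)
    {z : E} (hz : g' z = 0) (a r : ℝ) (y : E) :
    sectorStorage g g' m L z y ≤ sectorSupply m L a r (y - z) (g' y) 0 0 0 0 := by
  simpa [sectorSupply] using sectorStorage_sub_smul_le hf hmL hz le_rfl zero_le_one y y

lemma sectorStorage_sub_le_sectorSupply {gp : E → ℝ} {gp' : E → E}
    (hf : IsSmoothStronglyConvex m L g g') (hmL : m < L) {z : E} (hz : g' z = 0)
    {a r : ℝ} (ha : a ^ 2 = m * (L - m) / 2) (hr0 : 0 ≤ r) (hr1 : r ≤ 1) (zp x y : E) :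
    sectorStorage g g' m L z y - r * sectorStorage gp gp' m L zp x
        - r * (L - m) * ((g x - g z) - (gp x - gp zp))
      ≤ sectorSupply m L a r (y - z) (g' y) (x - z) (g' x) (gp' x - m • (x - zp))
          (a • (x - zp)) := by
  have h := sectorStorage_sub_smul_le hf hmL hz hr0 hr1 x y
  rw [show (L • (y - z) - g' y) - r • (L • (x - z) - g' x)
      = L • (y - z) - g' y - r • (L • (x - z)) + r • g' x by module] at h
  simp only [sectorStorage, sectorSupply, norm_smul, mul_pow, Real.norm_eq_abs, sq_abs, ha] at *
  linear_combination h

end Sector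

section Dissipation

lemma sum_Icc_pow_succ_sub_mul {R : Type*} [CommSemiring R] (r : R) (f : ℕ → R) (m : ℕ) :
    ∑ t ∈ Icc 1 m, r ^ (m + 1 - t) * f t = r * ∑ t ∈ Icc 1 m, r ^ (m - t) * f t := by
  rw [mul_sum]
  refine sum_congr rfl fun t ht => ?_
  rw [Nat.sub_add_comm (mem_Icc.1 ht).2, pow_succ]
  ring

lemma le_pow_mul_add_sum_of_dissipation {V D S G F : ℕ → ℝ} {r : ℝ} (hr : 0 ≤ r)
    (hdiss : ∀ k, V (k + 1) + S k ≤ r * V k + G (k + 1)) (hS₀ : D 0 ≤ S 0)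
    (hS : ∀ k, D (k + 1) - r * D k - F (k + 1) ≤ S (k + 1)) (hD : ∀ k, 0 ≤ D k) (k : ℕ) :
    V k ≤ r ^ k * V 0 + ∑ t ∈ Icc 1 k, r ^ (k - t) * G t
      + ∑ t ∈ Icc 1 (k - 1), r ^ (k - t - 1) * F t := by
  have key : ∀ n, V (n + 1) + D n ≤ r ^ (n + 1) * V 0
      + ∑ t ∈ Icc 1 (n + 1), r ^ (n + 1 - t) * G t + ∑ t ∈ Icc 1 n, r ^ (n - t) * F t := by
    intro n
    induction n with
    | zero => simpa using (by linarith [hdiss 0] : V 1 + D 0 ≤ r * V 0 + G 1)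
    | succ n ih =>
      have hG : ∑ t ∈ Icc 1 (n + 2), r ^ (n + 2 - t) * G t
          = r * ∑ t ∈ Icc 1 (n + 1), r ^ (n + 1 - t) * G t + G (n + 2) := by
        rw [sum_Icc_succ_top (by omega), sum_Icc_pow_succ_sub_mul]
        simp
      have hF : ∑ t ∈ Icc 1 (n + 1), r ^ (n + 1 - t) * F t
          = r * ∑ t ∈ Icc 1 n, r ^ (n - t) * F t + F (n + 1) := by
        rw [sum_Icc_succ_top (by omega), sum_Icc_pow_succ_sub_mul]
        simp
      rw [hG, hF, pow_succ]
      linarith [hdiss (n + 1), hS n, mul_le_mul_of_nonneg_left ih hr]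
  cases k with
  | zero => simp
  | succ n =>
    simpa [Nat.sub_sub, Nat.add_sub_add_right] using (key n).trans' (le_add_of_nonneg_right (hD n))

lemma tracking_bound_of_dissipation {ι : Type*} [Fintype ι] {X V D S G : ℕ → ℝ}
    {F : ι → ℕ → ℝ} {w : ι → ℝ} {r c C : ℝ} (hr : 0 ≤ r) (hc : 0 < c) (hX : ∀ k, c * X k ≤ V k)
    (hV₀ : V 0 ≤ C * X 0) (hdiss : ∀ k, V (k + 1) + S k ≤ r * V k + G (k + 1))
    (hS₀ : D 0 ≤ S 0) (hS : ∀ k, D (k + 1) - r * D k - ∑ i, w i * F i (k + 1) ≤ S (k + 1))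
    (hD : ∀ k, 0 ≤ D k) (k : ℕ) :
    X k ≤ C / c * r ^ k * X 0 + 1 / c * ∑ t ∈ Icc 1 k, r ^ (k - t) * G t
      + 1 / c * ∑ i, w i * ∑ t ∈ Icc 1 (k - 1), r ^ (k - t - 1) * F i t := by
  have h := le_pow_mul_add_sum_of_dissipation (F := fun t => ∑ i, w i * F i t) hr hdiss hS₀ hS
    hD k
  have hswap : ∑ t ∈ Icc 1 (k - 1), r ^ (k - t - 1) * ∑ i, w i * F i t
      = ∑ i, w i * ∑ t ∈ Icc 1 (k - 1), r ^ (k - t - 1) * F i t := by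
    simp only [mul_sum]
    rw [sum_comm]
    exact sum_congr rfl fun _ _ => sum_congr rfl fun _ _ => by ring
  rw [div_mul_eq_mul_div, div_mul_eq_mul_div, one_div_mul_eq_div, one_div_mul_eq_div, ← add_div,
    ← add_div, le_div_iff₀ hc, ← hswap]
  nlinarith [hX k, mul_le_mul_of_nonneg_left hV₀ (pow_nonneg hr k)]

end Dissipation

/-- The state `ζ_k` of the IQC filter, as it enters the dissipation LMI. -/
def iqcFilterState {ι E : Type*} [AddCommGroup E] [Module ℝ E] (m a : ℝ) (g' : ℕ → E → E)
    (z : ℕ → E) (Y : ℕ → ι → E) : ℕ → ι → Fin 4 → E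
  | 0 => 0
  | k + 1 => fun i =>
      ![Y k i - z (k + 1), g' (k + 1) (Y k i), g' k (Y k i) - m • (Y k i - z k), a • (Y k i - z k)]

section Filter

variable {ι E : Type*} [Fintype ι] [NormedAddCommGroup E] [InnerProductSpace ℝ E]
  [CompleteSpace E] {g : ℕ → E → ℝ} {g' : ℕ → E → E} {z : ℕ → E} {m L : ℝ}

lemma sum_sectorStorage_le_sum_sectorSupply_iqcFilterState_zero
    (hf : IsSmoothStronglyConvex m L (g 0) (g' 0)) (hmL : m < L) (hz : g' 0 (z 0) = 0)
    {w : ι → ℝ} (hw : ∀ i, 0 ≤ w i) (a r : ℝ) (Y : ℕ → ι → E) :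
    ∑ i, w i * sectorStorage (g 0) (g' 0) m L (z 0) (Y 0 i)
      ≤ ∑ i, w i * sectorSupply m L a r (Y 0 i - z 0) (g' 0 (Y 0 i))
          (iqcFilterState m a g' z Y 0 i 0) (iqcFilterState m a g' z Y 0 i 1)
          (iqcFilterState m a g' z Y 0 i 2) (iqcFilterState m a g' z Y 0 i 3) :=
  sum_le_sum fun i _ => mul_le_mul_of_nonneg_left
    (sectorStorage_le_sectorSupply_zero hf hmL hz a r (Y 0 i)) (hw i)

lemma sum_sectorStorage_sub_le_sum_sectorSupply_iqcFilterState_succ (k : ℕ)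
    (hf : IsSmoothStronglyConvex m L (g (k + 1)) (g' (k + 1))) (hmL : m < L)
    (hz : g' (k + 1) (z (k + 1)) = 0) {w : ι → ℝ} (hw : ∀ i, 0 ≤ w i) {a r : ℝ}
    (ha : a ^ 2 = m * (L - m) / 2) (hr0 : 0 ≤ r) (hr1 : r ≤ 1) (Y : ℕ → ι → E) :
    ∑ i, w i * sectorStorage (g (k + 1)) (g' (k + 1)) m L (z (k + 1)) (Y (k + 1) i)
        - r * ∑ i, w i * sectorStorage (g k) (g' k) m L (z k) (Y k i)
        - ∑ i, w i * r * (L - m)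
            * ((g (k + 1) (Y k i) - g (k + 1) (z (k + 1))) - (g k (Y k i) - g k (z k)))
      ≤ ∑ i, w i * sectorSupply m L a r (Y (k + 1) i - z (k + 1)) (g' (k + 1) (Y (k + 1) i))
          (iqcFilterState m a g' z Y (k + 1) i 0) (iqcFilterState m a g' z Y (k + 1) i 1)
          (iqcFilterState m a g' z Y (k + 1) i 2) (iqcFilterState m a g' z Y (k + 1) i 3) := by
  rw [mul_sum, ← sum_sub_distrib, ← sum_sub_distrib]
  refine sum_le_sum fun i _ => ?_
  have h := sectorStorage_sub_le_sectorSupply hf hmL hz (gp := g k) (gp' := g' k) ha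
    hr0 hr1 (z k) (Y k i) (Y (k + 1) i)
  calc _ = w i * (sectorStorage (g (k + 1)) (g' (k + 1)) m L (z (k + 1)) (Y (k + 1) i)
        - r * sectorStorage (g k) (g' k) m L (z k) (Y k i)
        - r * (L - m) * ((g (k + 1) (Y k i) - g (k + 1) (z (k + 1)))
          - (g k (Y k i) - g k (z k)))) := by ring
    _ ≤ _ := mul_le_mul_of_nonneg_left h (hw i)

end Filter

section Blocks

variable {ι : Type*} [Fintype ι]

lemma toE_add (v w : ι → ℝ) : toE (v + w) = toE v + toE w := rfl

lemma toE_sub (v w : ι → ℝ) : toE (v - w) = toE v - toE w := rfl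

lemma toE_smul (c : ℝ) (v : ι → ℝ) : toE (c • v) = c • toE v := rfl

lemma toE_ofLp (x : EuclideanSpace ℝ ι) : toE x.ofLp = x := rfl

lemma dotProduct_eq_inner_toE (v w : ι → ℝ) : v ⬝ᵥ w = ⟪toE v, toE w⟫ := by
  simp [toE, EuclideanSpace.inner_eq_star_dotProduct, dotProduct_comm]

lemma norm_toE_sq (v : ι → ℝ) : ‖toE v‖ ^ 2 = ∑ i, v i ^ 2 := by
  simp [toE, EuclideanSpace.norm_sq_eq]

lemma sectorSupply_toE (m L a r : ℝ) (s u ζ₁ ζ₂ ζ₃ ζ₄ : ι → ℝ) :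
    sectorSupply m L a r (toE s) (toE u) (toE ζ₁) (toE ζ₂) (toE ζ₃) (toE ζ₄)
      = (L • s - u - r • (L • ζ₁) + r • ζ₂) ⬝ᵥ (u - m • s) + r * ‖toE ζ₄‖ ^ 2
        - r * a ^ 2 * ‖toE ζ₁‖ ^ 2 + r / 2 * ‖toE ζ₃‖ ^ 2 - r / 2 * ‖toE (ζ₂ - m • ζ₁)‖ ^ 2 := by
  rw [dotProduct_eq_inner_toE]
  rfl

end Blocks

section ClosedLoop

open Matrix

variable {p d nξ : ℕ} {C : Matrix (Fin p × Fin d) (Fin nξ) ℝ}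
  {D : Matrix (Fin p × Fin d) (Fin p × Fin d) ℝ} {U : Matrix (Fin nξ) (Fin d) ℝ}

lemma norm_toE_sq_eq_sum_blk (v : Fin p × Fin d → ℝ) :
    ‖toE v‖ ^ 2 = ∑ i, ‖toE (blk v i)‖ ^ 2 := by
  simp only [norm_toE_sq, Fintype.sum_prod_type, blk]

lemma norm_toE_pack_sq (ξ : Fin nξ → ℝ) (ζ : Fin p → Fin 4 → Fin d → ℝ) :
    ‖toE (pack nξ p d ξ ζ)‖ ^ 2
      = ‖toE ξ‖ ^ 2 + ∑ q : Fin p × Fin 4 × Fin d, ζ q.1 q.2.1 q.2.2 ^ 2 := by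
  simp only [norm_toE_sq, Fintype.sum_sum_type, pack, Sum.elim_inl, Sum.elim_inr]

lemma norm_toE_sq_le_norm_toE_pack_sq (ξ : Fin nξ → ℝ) (ζ : Fin p → Fin 4 → Fin d → ℝ) :
    ‖toE ξ‖ ^ 2 ≤ ‖toE (pack nξ p d ξ ζ)‖ ^ 2 := by
  rw [norm_toE_pack_sq]
  exact le_add_of_nonneg_right (sum_nonneg fun _ _ => sq_nonneg _)

lemma toE_blk_sub_ofLp (u : Fin p × Fin d → ℝ)
    (G : EuclideanSpace ℝ (Fin d) → EuclideanSpace ℝ (Fin d)) (Y : Fin p → EuclideanSpace ℝ (Fin d))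
    (i : Fin p) : toE (blk (fun q => u q - (G (Y q.1)).ofLp q.2) i) = toE (blk u i) - G (Y i) :=
  rfl

lemma mulVec_sub_add_mulVec_sub {A : Matrix (Fin nξ) (Fin nξ) ℝ}
    (B : Matrix (Fin nξ) (Fin p × Fin d) ℝ) (hAU : A * U = U) (ξ : Fin nξ → ℝ)
    (u : Fin p × Fin d → ℝ) (x x' : Fin d → ℝ) :
    A *ᵥ (ξ - U *ᵥ x) + B *ᵥ u + (U *ᵥ x - U *ᵥ x') = A *ᵥ ξ + B *ᵥ u - U *ᵥ x' := by
  rw [mulVec_sub, mulVec_mulVec, hAU]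
  abel

lemma toE_blk_mulVec_sub (hCU : ∀ v, C *ᵥ (U *ᵥ v) = fun ij => v ij.2) (ξ : Fin nξ → ℝ)
    (u : Fin p × Fin d → ℝ) (x : EuclideanSpace ℝ (Fin d)) (i : Fin p) :
    toE (blk (C *ᵥ (ξ - U *ᵥ x) + D *ᵥ u) i) = toE (blk (C *ᵥ ξ + D *ᵥ u) i) - x := by
  ext j
  simp only [toE, blk, mulVec_sub, hCU, Pi.add_apply, Pi.sub_apply, PiLp.sub_apply]
  ring

lemma toE_mulVec_sub_mulVec (hCU : ∀ v, C *ᵥ (U *ᵥ v) = fun ij => v ij.2)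
    (x x' : EuclideanSpace ℝ (Fin d)) (i : Fin p) :
    toE (fun j => (C *ᵥ (U *ᵥ x - U *ᵥ x')) (i, j)) = x - x' := by
  ext j
  simp [toE, mulVec_sub, hCU]

/-- Along the closed loop, the filter part of the LMI's successor vector is the next
`iqcFilterState`. -/
lemma lmi_filter_update_eq (hCU : ∀ v, C *ᵥ (U *ᵥ v) = fun ij => v ij.2) {ξ : Fin nξ → ℝ}
    {u y : Fin p × Fin d → ℝ} (hy : C *ᵥ ξ + D *ᵥ u = y)
    {G₀ G₁ : EuclideanSpace ℝ (Fin d) → EuclideanSpace ℝ (Fin d)}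
    (hu : ∀ i, toE (blk u i) = G₀ (toE (blk y i))) (x x₁ : EuclideanSpace ℝ (Fin d)) (m a : ℝ)
    (i₀ : Fin p) :
    (fun i => ![blk (C *ᵥ (ξ - U *ᵥ x) + D *ᵥ u) i + fun j => (C *ᵥ (U *ᵥ x - U *ᵥ x₁)) (i₀, j),
        blk u i - blk (fun q => u q - G₁ (toE (blk y q.1)) q.2) i,
        blk u i - m • blk (C *ᵥ (ξ - U *ᵥ x) + D *ᵥ u) i,
        a • blk (C *ᵥ (ξ - U *ᵥ x) + D *ᵥ u) i])
      = fun i l => (![toE (blk y i) - x₁, G₁ (toE (blk y i)),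
          G₀ (toE (blk y i)) - m • (toE (blk y i) - x), a • (toE (blk y i) - x)] l).ofLp := by
  funext i l
  have hs := toE_blk_mulVec_sub (D := D) hCU ξ u x i
  rw [hy] at hs
  fin_cases l <;> refine congrArg WithLp.ofLp (?_ : toE (ι := Fin d) _ = _)
  · rw [toE_add, hs, toE_mulVec_sub_mulVec hCU]
    exact sub_add_sub_cancel _ _ _
  · ext j
    simp [toE, blk]
  · rw [toE_sub, toE_smul, hu, hs]
    rfl
  · rw [toE_smul, hs]
    rfl

end ClosedLoop

theorem tracking_bound_variational_iqc_constant_sector_general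
    (d p nξ nθ : ℕ) (hp : 1 ≤ p)
    (Θ : Set (Fin nθ → ℝ)) (Vset : Set ((Fin nθ → ℝ) × (Fin nθ → ℝ)))
    (hV : ∀ θ Δθ : Fin nθ → ℝ, (θ, Δθ) ∈ Vset → θ ∈ Θ ∧ θ + Δθ ∈ Θ)
    (A : (Fin nθ → ℝ) → Matrix (Fin nξ) (Fin nξ) ℝ)
    (B : (Fin nθ → ℝ) → Matrix (Fin nξ) (Fin p × Fin d) ℝ)
    (C : (Fin nθ → ℝ) → Matrix (Fin p × Fin d) (Fin nξ) ℝ)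
    (D : (Fin nθ → ℝ) → Matrix (Fin p × Fin d) (Fin p × Fin d) ℝ)
    (U : Matrix (Fin nξ) (Fin d) ℝ)
    (hAU : ∀ θ ∈ Θ, A θ * U = U)
    (hCU : ∀ θ ∈ Θ, ∀ v : Fin d → ℝ,
      (C θ).mulVec (U.mulVec v) = fun ij => v ij.2)
    (m L : (Fin nθ → ℝ) → ℝ)
    (m₀ L₀ : ℝ) (hm₀ : 0 < m₀) (hmL₀ : m₀ < L₀)
    (hconst : ∀ θ ∈ Θ, m θ = m₀ ∧ L θ = L₀)
    (a : (Fin nθ → ℝ) → ℝ)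
    (ha : ∀ θ ∈ Θ, a θ = Real.sqrt (m θ * (L θ - m θ) / 2))
    (f : EuclideanSpace ℝ (Fin d) → (Fin nθ → ℝ) → ℝ)
    (f' : (Fin nθ → ℝ) → EuclideanSpace ℝ (Fin d) → EuclideanSpace ℝ (Fin d))
    (hgrad : ∀ θ ∈ Θ, ∀ x, HasGradientAt (fun z => f z θ) (f' θ x) x)
    (hsc : ∀ θ ∈ Θ, ConvexOn ℝ Set.univ (fun z => f z θ - m θ / 2 * ‖z‖ ^ 2))
    (hlip : ∀ θ ∈ Θ, ∀ x y, ‖f' θ x - f' θ y‖ ≤ L θ * ‖x - y‖)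
    (xstar : (Fin nθ → ℝ) → EuclideanSpace ℝ (Fin d))
    (hxstar : ∀ θ ∈ Θ, f' θ (xstar θ) = 0)
    (ρ : ℝ) (hρ0 : 0 < ρ) (hρ1 : ρ < 1)
    (lam : Fin p → ℝ) (hlam : ∀ i, 0 ≤ lam i)
    (γξ γδ : ℝ)
    (lamLo lamHi : ℝ) (hlo : 0 < lamLo)
    (P : (Fin nθ → ℝ) → Matrix (Fin nξ ⊕ (Fin p × Fin 4 × Fin d))
      (Fin nξ ⊕ (Fin p × Fin 4 × Fin d)) ℝ)
    (hPbounds : ∀ θ ∈ Θ, ∀ v : (Fin nξ ⊕ (Fin p × Fin 4 × Fin d)) → ℝ,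
      lamLo * ‖toE v‖ ^ 2 ≤ quadForm (P θ) v ∧
      quadForm (P θ) v ≤ lamHi * ‖toE v‖ ^ 2)
    (hLMI : ∀ θ Δθ : Fin nθ → ℝ, (θ, Δθ) ∈ Vset →
      ∀ (ξt : Fin nξ → ℝ) (ζ : Fin p → Fin 4 → Fin d → ℝ)
        (u : Fin p × Fin d → ℝ) (Δ : Fin nξ → ℝ) (w : Fin p × Fin d → ℝ),
        quadForm (P (θ + Δθ))
            (pack nξ p d ((A θ).mulVec ξt + (B θ).mulVec u + Δ)
              (fun i =>
                ![blk ((C θ).mulVec ξt + (D θ).mulVec u) i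
                    + (fun j => (C θ).mulVec Δ (⟨0, hp⟩, j)),
                  blk u i - blk w i,
                  blk u i - m θ • blk ((C θ).mulVec ξt + (D θ).mulVec u) i,
                  a θ • blk ((C θ).mulVec ξt + (D θ).mulVec u) i]))
          - ρ ^ 2 * quadForm (P θ) (pack nξ p d ξt ζ)
          + (∑ i : Fin p, lam i *
              (dotProduct
                (L θ • blk ((C θ).mulVec ξt + (D θ).mulVec u) i - blk u i
                  - ρ ^ 2 • (L θ • ζ i 0) + ρ ^ 2 • ζ i 1)
                (blk u i - m θ • blk ((C θ).mulVec ξt + (D θ).mulVec u) i)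
               + ρ ^ 2 * ‖toE (ζ i 3)‖ ^ 2
               - ρ ^ 2 * (a θ) ^ 2 * ‖toE (ζ i 0)‖ ^ 2
               + ρ ^ 2 / 2 * ‖toE (ζ i 2)‖ ^ 2
               - ρ ^ 2 / 2 * ‖toE (ζ i 1 - m θ • ζ i 0)‖ ^ 2))
          - γξ * ‖toE Δ‖ ^ 2 - γδ * ‖toE w‖ ^ 2 ≤ 0)
    (θseq : ℕ → Fin nθ → ℝ)
    (hθseq : ∀ k : ℕ, (θseq k, θseq (k + 1) - θseq k) ∈ Vset)
    (ξ : ℕ → Fin nξ → ℝ) (u y : ℕ → Fin p × Fin d → ℝ)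
    (hdyn : ∀ k : ℕ,
      ξ (k + 1) = (A (θseq k)).mulVec (ξ k) + (B (θseq k)).mulVec (u k) ∧
      y k = (C (θseq k)).mulVec (ξ k) + (D (θseq k)).mulVec (u k))
    (hu_grad : ∀ k : ℕ, ∀ i : Fin p,
      toE (blk (u k) i) = f' (θseq k) (toE (blk (y k) i))) :
    ∀ k : ℕ, 1 ≤ k →
      ‖toE (ξ k - U.mulVec (xstar (θseq k)))‖ ^ 2 ≤
        lamHi / lamLo * ρ ^ (2 * k) *
            ‖toE (ξ 0 - U.mulVec (xstar (θseq 0)))‖ ^ 2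
        + (1 / lamLo) * ∑ t ∈ Finset.Icc 1 k, ρ ^ (2 * (k - t)) *
            (γξ * ‖toE (U.mulVec (xstar (θseq (t - 1)))
                - U.mulVec (xstar (θseq t)))‖ ^ 2
             + γδ * ∑ i : Fin p,
                ‖f' (θseq (t - 1)) (toE (blk (y (t - 1)) i))
                  - f' (θseq t) (toE (blk (y (t - 1)) i))‖ ^ 2)
        + (1 / lamLo) * ∑ i : Fin p, (lam i * ρ ^ 2 * (L₀ - m₀)) *
            ∑ t ∈ Finset.Icc 1 (k - 1), ρ ^ (2 * (k - t - 1)) *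
              ((f (toE (blk (y (t - 1)) i)) (θseq t)
                  - f (xstar (θseq t)) (θseq t))
                - (f (toE (blk (y (t - 1)) i)) (θseq (t - 1))
                  - f (xstar (θseq (t - 1))) (θseq (t - 1)))) := by

  intro k _
  have hmem : ∀ j, θseq j ∈ Θ := fun j => (hV _ _ (hθseq j)).1
  have hm : ∀ j, m (θseq j) = m₀ := fun j => (hconst _ (hmem j)).1
  have hL : ∀ j, L (θseq j) = L₀ := fun j => (hconst _ (hmem j)).2
  set a₀ := √(m₀ * (L₀ - m₀) / 2)
  have ha' : ∀ j, a (θseq j) = a₀ := fun j => by rw [ha _ (hmem j), hm, hL]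
  have ha₀ : a₀ ^ 2 = m₀ * (L₀ - m₀) / 2 := Real.sq_sqrt (by nlinarith)
  set g : ℕ → EuclideanSpace ℝ (Fin d) → ℝ := fun j x => f x (θseq j)
  set g' := fun j => f' (θseq j)
  set z := fun j => xstar (θseq j)
  set Y := fun j i => toE (blk (y j) i)
  set ψ := iqcFilterState m₀ a₀ g' z Y
  have hf : ∀ j, IsSmoothStronglyConvex m₀ L₀ (g j) (g' j) := fun j =>
    ⟨hgrad _ (hmem j), hm j ▸ hsc _ (hmem j), hL j ▸ hlip _ (hmem j)⟩
  have hz : ∀ j, g' j (z j) = 0 := fun j => hxstar _ (hmem j)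
  let V := fun j => quadForm (P (θseq j))
    (pack nξ p d (ξ j - U.mulVec (z j)) fun i l => (ψ j i l).ofLp)
  let S := fun j => ∑ i, lam i * sectorSupply m₀ L₀ a₀ (ρ ^ 2) (Y j i - z j) (g' j (Y j i))
    (ψ j i 0) (ψ j i 1) (ψ j i 2) (ψ j i 3)
  let G := fun t => γξ * ‖toE (U.mulVec (z (t - 1)) - U.mulVec (z t))‖ ^ 2
    + γδ * ∑ i, ‖g' (t - 1) (Y (t - 1) i) - g' t (Y (t - 1) i)‖ ^ 2
  have hdiss : ∀ j, V (j + 1) + S j ≤ ρ ^ 2 * V j + G (j + 1) := by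
    intro j
    have h := hLMI _ _ (hθseq j) (ξ j - U.mulVec (z j)) (fun i l => (ψ j i l).ofLp) (u j)
      (U.mulVec (z j) - U.mulVec (z (j + 1))) (fun q => u j q - g' (j + 1) (Y j q.1) q.2)
    rw [add_sub_cancel, hm, hL, ha', mulVec_sub_add_mulVec_sub _ (hAU _ (hmem j)), ← (hdyn j).1,
      lmi_filter_update_eq (hCU _ (hmem j)) (hdyn j).2.symm (hu_grad j)] at h
    simp only [← sectorSupply_toE] at h
    simp only [toE_blk_mulVec_sub (hCU _ (hmem j)), ← (hdyn j).2, hu_grad, toE_ofLp,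
      norm_toE_sq_eq_sum_blk, toE_blk_sub_ofLp] at h
    simp only [V, S, G, Y, g', z, ψ, iqcFilterState, add_tsub_cancel_right] at h ⊢
    linarith
  simp only [pow_mul]
  refine tracking_bound_of_dissipation (X := fun j => ‖toE (ξ j - U.mulVec (z j))‖ ^ 2)
    (V := V) (S := S) (G := G) (C := lamHi)
    (D := fun j => ∑ i, lam i * sectorStorage (g j) (g' j) m₀ L₀ (z j) (Y j i))
    (F := fun i t => (g t (Y (t - 1) i) - g t (z t))
      - (g (t - 1) (Y (t - 1) i) - g (t - 1) (z (t - 1))))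
    (w := fun i => lam i * ρ ^ 2 * (L₀ - m₀)) (sq_nonneg ρ) hlo (fun j => ?_) ?_ hdiss
    (sum_sectorStorage_le_sum_sectorSupply_iqcFilterState_zero (hf 0) hmL₀
      (hz 0) hlam a₀ _ Y) (fun j => ?_) (fun j => ?_) k
  · exact (mul_le_mul_of_nonneg_left (norm_toE_sq_le_norm_toE_pack_sq _ _) hlo.le).trans
      (hPbounds _ (hmem j) _).1
  · refine (hPbounds _ (hmem 0) _).2.trans_eq ?_
    simp [norm_toE_pack_sq, ψ, iqcFilterState]
  · simpa [mul_assoc] using sum_sectorStorage_sub_le_sum_sectorSupply_iqcFilterState_succ j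
      (hf _) hmL₀ (hz _) hlam ha₀ (sq_nonneg ρ) (pow_le_one₀ hρ0.le hρ1.le) Y
  · exact sum_nonneg fun i _ =>
      mul_nonneg (hlam i) (sectorStorage_nonneg (hf j) hmL₀ (hz j) _)

/-- Variational-IQC tracking bound in the case of constant sector parameters
`m`, `L`. -/
theorem tracking_bound_variational_iqc_constant_sector
    (d p nξ nθ : ℕ) (hd : 1 ≤ d) (hp : 1 ≤ p)
    (Θ : Set (Fin nθ → ℝ)) (Vset : Set ((Fin nθ → ℝ) × (Fin nθ → ℝ)))
    (hV : ∀ θ Δθ : Fin nθ → ℝ, (θ, Δθ) ∈ Vset → θ ∈ Θ ∧ θ + Δθ ∈ Θ)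
    (A : (Fin nθ → ℝ) → Matrix (Fin nξ) (Fin nξ) ℝ)
    (B : (Fin nθ → ℝ) → Matrix (Fin nξ) (Fin p × Fin d) ℝ)
    (C : (Fin nθ → ℝ) → Matrix (Fin p × Fin d) (Fin nξ) ℝ)
    (D : (Fin nθ → ℝ) → Matrix (Fin p × Fin d) (Fin p × Fin d) ℝ)
    (U : Matrix (Fin nξ) (Fin d) ℝ)
    (hAU : ∀ θ ∈ Θ, A θ * U = U)
    (hCU : ∀ θ ∈ Θ, ∀ v : Fin d → ℝ,
      (C θ).mulVec (U.mulVec v) = fun ij => v ij.2)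
    (m L : (Fin nθ → ℝ) → ℝ)
    (m₀ L₀ : ℝ) (hm₀ : 0 < m₀) (hmL₀ : m₀ < L₀)
    (hconst : ∀ θ ∈ Θ, m θ = m₀ ∧ L θ = L₀)
    (hmL : ∀ θ ∈ Θ, 0 < m θ ∧ m θ < L θ)
    (a : (Fin nθ → ℝ) → ℝ)
    (ha : ∀ θ ∈ Θ, a θ = Real.sqrt (m θ * (L θ - m θ) / 2))
    (f : EuclideanSpace ℝ (Fin d) → (Fin nθ → ℝ) → ℝ)
    (f' : (Fin nθ → ℝ) → EuclideanSpace ℝ (Fin d) → EuclideanSpace ℝ (Fin d))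
    (hgrad : ∀ θ ∈ Θ, ∀ x, HasGradientAt (fun z => f z θ) (f' θ x) x)
    (hsc : ∀ θ ∈ Θ, ConvexOn ℝ Set.univ (fun z => f z θ - m θ / 2 * ‖z‖ ^ 2))
    (hlip : ∀ θ ∈ Θ, ∀ x y, ‖f' θ x - f' θ y‖ ≤ L θ * ‖x - y‖)
    (xstar : (Fin nθ → ℝ) → EuclideanSpace ℝ (Fin d))
    (hxstar : ∀ θ ∈ Θ, f' θ (xstar θ) = 0)
    (ρ : ℝ) (hρ0 : 0 < ρ) (hρ1 : ρ < 1)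
    (lam : Fin p → ℝ) (hlam : ∀ i, 0 ≤ lam i)
    (γξ γδ : ℝ) (hγξ : 0 ≤ γξ) (hγδ : 0 ≤ γδ)
    (lamLo lamHi : ℝ) (hlo : 0 < lamLo) (hlohi : lamLo ≤ lamHi)
    (P : (Fin nθ → ℝ) → Matrix (Fin nξ ⊕ (Fin p × Fin 4 × Fin d))
      (Fin nξ ⊕ (Fin p × Fin 4 × Fin d)) ℝ)
    (hPsymm : ∀ θ ∈ Θ, (P θ).IsSymm)
    (hPbounds : ∀ θ ∈ Θ, ∀ v : (Fin nξ ⊕ (Fin p × Fin 4 × Fin d)) → ℝ,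
      lamLo * ‖toE v‖ ^ 2 ≤ quadForm (P θ) v ∧
      quadForm (P θ) v ≤ lamHi * ‖toE v‖ ^ 2)
    (hLMI : ∀ θ Δθ : Fin nθ → ℝ, (θ, Δθ) ∈ Vset →
      ∀ (ξt : Fin nξ → ℝ) (ζ : Fin p → Fin 4 → Fin d → ℝ)
        (u : Fin p × Fin d → ℝ) (Δ : Fin nξ → ℝ) (w : Fin p × Fin d → ℝ),
        quadForm (P (θ + Δθ))
            (pack nξ p d ((A θ).mulVec ξt + (B θ).mulVec u + Δ)
              (fun i =>
                ![blk ((C θ).mulVec ξt + (D θ).mulVec u) i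
                    + (fun j => (C θ).mulVec Δ (⟨0, hp⟩, j)),
                  blk u i - blk w i,
                  blk u i - m θ • blk ((C θ).mulVec ξt + (D θ).mulVec u) i,
                  a θ • blk ((C θ).mulVec ξt + (D θ).mulVec u) i]))
          - ρ ^ 2 * quadForm (P θ) (pack nξ p d ξt ζ)
          + (∑ i : Fin p, lam i *
              (dotProduct
                (L θ • blk ((C θ).mulVec ξt + (D θ).mulVec u) i - blk u i
                  - ρ ^ 2 • (L θ • ζ i 0) + ρ ^ 2 • ζ i 1)
                (blk u i - m θ • blk ((C θ).mulVec ξt + (D θ).mulVec u) i)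
               + ρ ^ 2 * ‖toE (ζ i 3)‖ ^ 2
               - ρ ^ 2 * (a θ) ^ 2 * ‖toE (ζ i 0)‖ ^ 2
               + ρ ^ 2 / 2 * ‖toE (ζ i 2)‖ ^ 2
               - ρ ^ 2 / 2 * ‖toE (ζ i 1 - m θ • ζ i 0)‖ ^ 2))
          - γξ * ‖toE Δ‖ ^ 2 - γδ * ‖toE w‖ ^ 2 ≤ 0)
    (θseq : ℕ → Fin nθ → ℝ)
    (hθseq : ∀ k : ℕ, (θseq k, θseq (k + 1) - θseq k) ∈ Vset)
    (ξ : ℕ → Fin nξ → ℝ) (u y : ℕ → Fin p × Fin d → ℝ)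
    (hdyn : ∀ k : ℕ,
      ξ (k + 1) = (A (θseq k)).mulVec (ξ k) + (B (θseq k)).mulVec (u k) ∧
      y k = (C (θseq k)).mulVec (ξ k) + (D (θseq k)).mulVec (u k))
    (hu_grad : ∀ k : ℕ, ∀ i : Fin p,
      toE (blk (u k) i) = f' (θseq k) (toE (blk (y k) i))) :
    ∀ k : ℕ, 1 ≤ k →
      ‖toE (ξ k - U.mulVec (xstar (θseq k)))‖ ^ 2 ≤
        lamHi / lamLo * ρ ^ (2 * k) *
            ‖toE (ξ 0 - U.mulVec (xstar (θseq 0)))‖ ^ 2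
        + (1 / lamLo) * ∑ t ∈ Finset.Icc 1 k, ρ ^ (2 * (k - t)) *
            (γξ * ‖toE (U.mulVec (xstar (θseq (t - 1)))
                - U.mulVec (xstar (θseq t)))‖ ^ 2
             + γδ * ∑ i : Fin p,
                ‖f' (θseq (t - 1)) (toE (blk (y (t - 1)) i))
                  - f' (θseq t) (toE (blk (y (t - 1)) i))‖ ^ 2)
        + (1 / lamLo) * ∑ i : Fin p, (lam i * ρ ^ 2 * (L₀ - m₀)) *
            ∑ t ∈ Finset.Icc 1 (k - 1), ρ ^ (2 * (k - t - 1)) *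
              ((f (toE (blk (y (t - 1)) i)) (θseq t)
                  - f (xstar (θseq t)) (θseq t))
                - (f (toE (blk (y (t - 1)) i)) (θseq (t - 1))
                  - f (xstar (θseq (t - 1))) (θseq (t - 1)))) :=
  tracking_bound_variational_iqc_constant_sector_general d p nξ nθ hp Θ Vset hV A B C D U hAU hCU m
    L m₀ L₀ hm₀ hmL₀ hconst a ha f f' hgrad hsc hlip xstar hxstar ρ hρ0 hρ1 lam hlam γξ γδ lamLo
    lamHi hlo P hPbounds hLMI θseq hθseq ξ u y hdyn hu_grad
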